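/- arXiv:2010.02628 — 5 statements merged into one kernel-verified Lean document; each statement's English description precedes it below -/
import Mathlib

section
/- Let (G, M, I) be a finite formal context and let I_P = {X ⊆ M | X is a passkey of X''} be the set of all passkeys. If X ∈ I_P and Y ⊆ X, then Y ∈ I_P (i.e., Y is a passkey of Y''). Hence I_P is an order ideal of the powerset of M ordered by inclusion. -/
set_option linter.unusedSectionVars false

/-- The extent `B'` of an itemset: objects having all attributes of `B`. -/
abbrev extentOf {G M : Type*} [Fintype G] (I : G → M → Prop) [∀ g m, Decidable (I g m)]
    (B : Finset M) : Finset G :=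
  Finset.univ.filter fun g => ∀ m ∈ B, I g m

/-- The intent `A'` of a set of objects: attributes shared by all objects of `A`. -/
abbrev intentOf {G M : Type*} [Fintype M] (I : G → M → Prop) [∀ g m, Decidable (I g m)]
    (A : Finset G) : Finset M :=
  Finset.univ.filter fun m => ∀ g ∈ A, I g m

/-- The closure `B''` of an itemset. -/
abbrev closureOf {G M : Type*} [Fintype G] [Fintype M] (I : G → M → Prop) [∀ g m, Decidable (I g m)]
    (B : Finset M) : Finset M :=
  intentOf I (extentOf I B)

/-- An itemset is closed when `B'' = B`. -/
abbrev isClosedItemset {G M : Type*} [Fintype G] [Fintype M] (I : G → M → Prop) [∀ g m, Decidable (I g m)]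
    (B : Finset M) : Prop :=
  closureOf I B = B

/-- A key: every proper subset has a different extent. -/
abbrev isKey {G M : Type*} [Fintype G] (I : G → M → Prop) [∀ g m, Decidable (I g m)]
    (X : Finset M) : Prop :=
  ∀ Y : Finset M, Y ⊂ X → extentOf I Y ≠ extentOf I X

/-- A passkey: a key of minimum cardinality among the keys of the same closed itemset. -/
abbrev isPasskey {G M : Type*} [Fintype G] [Fintype M] (I : G → M → Prop) [∀ g m, Decidable (I g m)]
    (X : Finset M) : Prop :=
  isKey I X ∧ ∀ Z : Finset M, isKey I Z → closureOf I Z = closureOf I X → X.card ≤ Z.card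

/-- The closure level `C_k`: closed itemsets having a passkey of cardinality `k`. -/
abbrev closureLevel {G M : Type*} [Fintype G] [Fintype M] (I : G → M → Prop) [∀ g m, Decidable (I g m)]
    (k : ℕ) : Set (Finset M) :=
  {B | isClosedItemset I B ∧ ∃ X : Finset M, isPasskey I X ∧ closureOf I X = B ∧ X.card = k}

section Aux
variable {G M : Type*} [Fintype G] [Fintype M] [DecidableEq M] [DecidableEq G] (I : G → M → Prop)
  [∀ g m, Decidable (I g m)]

lemma extent_anti {B C : Finset M} (h : B ⊆ C) : extentOf I C ⊆ extentOf I B := by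
  intro g hg
  simp only [extentOf, Finset.mem_filter, Finset.mem_univ, true_and] at hg ⊢
  exact fun m hm => hg m (h hm)

lemma extent_union (B C : Finset M) :
    extentOf I (B ∪ C) = extentOf I B ∩ extentOf I C := by
  ext g
  simp [extentOf, Finset.mem_inter, or_imp, forall_and]

lemma fca_subset_closure (B : Finset M) : B ⊆ closureOf I B := by
  intro m hm
  simp only [closureOf, intentOf, Finset.mem_filter, Finset.mem_univ, true_and]
  intro g hg
  try simp only [extentOf, Finset.mem_filter, Finset.mem_univ, true_and] at hg
  exact hg m hm

lemma extent_closure (B : Finset M) : extentOf I (closureOf I B) = extentOf I B := by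
  apply Finset.Subset.antisymm (extent_anti I (fca_subset_closure I B))
  intro g hg
  simp only [extentOf, Finset.mem_filter, Finset.mem_univ, true_and] at hg ⊢
  intro m hm
  try simp only [closureOf, intentOf, Finset.mem_filter] at hm
  exact hm g hg

lemma closure_eq_of_extent_eq {B C : Finset M} (h : extentOf I B = extentOf I C) :
    closureOf I B = closureOf I C := by
  unfold closureOf; rw [h]

lemma exists_key_subset (B : Finset M) :
    ∃ Z ⊆ B, isKey I Z ∧ extentOf I Z = extentOf I B := by
  classical
  have hne : (B.powerset.filter fun Z => extentOf I Z = extentOf I B).Nonempty :=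
    ⟨B, by simp⟩
  obtain ⟨Z, hZ, hmin⟩ :=
    (B.powerset.filter fun Z => extentOf I Z = extentOf I B).exists_min_image Finset.card hne
  simp only [Finset.mem_filter, Finset.mem_powerset] at hZ
  refine ⟨Z, hZ.1, ?_, hZ.2⟩
  intro Y hY hEY
  have hYmem : Y ∈ B.powerset.filter fun W => extentOf I W = extentOf I B := by
    simp only [Finset.mem_filter, Finset.mem_powerset]
    exact ⟨hY.subset.trans hZ.1, hEY.trans hZ.2⟩
  exact absurd (Finset.card_lt_card hY) (not_lt.2 (hmin Y hYmem))

end Aux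

/-- The set of passkeys is downward closed: any subset of a passkey is a
passkey; hence the set of passkeys is an order ideal (lower set) of the powerset of `M`
ordered by inclusion. -/
theorem passkeys_form_order_ideal {G M : Type*} [Fintype G] [Fintype M]
    (I : G → M → Prop) [∀ g m, Decidable (I g m)] :
    (∀ X Y : Finset M, isPasskey I X → Y ⊆ X → isPasskey I Y) ∧
    IsLowerSet {X : Finset M | isPasskey I X} := by
  classical
  have main : ∀ X Y : Finset M, isPasskey I X → Y ⊆ X → isPasskey I Y := by
    intro X Y hX hYX
    have hbX : Y.card ≤ X.card := Finset.card_le_card hYX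
    constructor
    · -- Y is a key
      intro Z hZ hEZ
      -- consider Z ∪ (X \ Y), a proper subset of X with the same extent
      have hsub : Z ∪ (X \ Y) ⊆ X :=
        Finset.union_subset (hZ.subset.trans hYX) (Finset.sdiff_subset)
      obtain ⟨m, hmY, hmZ⟩ := Finset.exists_of_ssubset hZ
      have hmem : m ∉ Z ∪ (X \ Y) := by
        simp only [Finset.mem_union, Finset.mem_sdiff, not_or]
        exact ⟨hmZ, fun h => h.2 hmY⟩
      have hss : Z ∪ (X \ Y) ⊂ X :=
        Finset.ssubset_iff_of_subset hsub |>.2 ⟨m, hYX hmY, hmem⟩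
      apply hX.1 _ hss
      rw [extent_union, hEZ, ← extent_union, Finset.union_sdiff_of_subset hYX]
    · -- minimality
      intro W hWkey hWcl
      by_contra hlt
      push_neg at hlt
      have hEW : extentOf I W = extentOf I Y := by
        have := congrArg (extentOf I) hWcl
        rwa [extent_closure, extent_closure] at this
      have hEB : extentOf I (W ∪ (X \ Y)) = extentOf I X := by
        rw [extent_union, hEW, ← extent_union, Finset.union_sdiff_of_subset hYX]
      obtain ⟨Z, hZB, hZkey, hZE⟩ := exists_key_subset I (W ∪ (X \ Y))
      have hclZ : closureOf I Z = closureOf I X :=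
        closure_eq_of_extent_eq I (hZE.trans hEB)
      have h1 : X.card ≤ Z.card := hX.2 Z hZkey hclZ
      have h2 : Z.card ≤ (W ∪ (X \ Y)).card := Finset.card_le_card hZB
      have h3 : (W ∪ (X \ Y)).card ≤ W.card + (X \ Y).card := Finset.card_union_le _ _
      have h4 : (X \ Y).card = X.card - Y.card := Finset.card_sdiff_of_subset hYX
      omega
  exact ⟨main, fun X Y hYX hX => main X Y hX hYX⟩
end

section
/- Let (G, M, I) be a finite formal context and X ⊆ M. Then X is a key (of X'') if and only if there exists a family of objects (g_m)_{m ∈ X} in G such that for all m, m' ∈ X: (g_m, m') ∈ I if and only if m' ≠ m; in other words, X is a key if and only if (G, M, I) contains a contranominal-scale subcontext whose attribute set is X. -/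
/-- `X` is a key iff there is a family of objects `(g_m)_{m ∈ X}` such that
for all `m, m' ∈ X`, `g_m` is incident with `m'` iff `m' ≠ m`, i.e. iff the context
contains a contranominal-scale subcontext with attribute set `X`. -/
theorem key_iff_contranominal_subcontext {G M : Type*} [Fintype G] [Fintype M]
    (I : G → M → Prop) [∀ g m, Decidable (I g m)] (X : Finset M) :
    isKey I X ↔
      ∃ g : {m : M // m ∈ X} → G,
        ∀ (a : {m : M // m ∈ X}) (m' : M), m' ∈ X → (I (g a) m' ↔ m' ≠ a.1) := by
  classical
  constructor
  · intro hkey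
    have h : ∀ a : {m : M // m ∈ X}, ∃ g : G, ∀ m' ∈ X, I g m' ↔ m' ≠ a.1 := by
      rintro ⟨m, hm⟩
      have hss : X.erase m ⊂ X := Finset.erase_ssubset hm
      have hne := hkey _ hss
      have hsub : extentOf I X ⊆ extentOf I (X.erase m) := by
        intro g hg
        simp only [Finset.mem_filter, Finset.mem_univ, true_and] at hg ⊢
        exact fun m' hm' => hg m' (Finset.mem_of_mem_erase hm')
      obtain ⟨g, hg1, hg2⟩ := Finset.exists_of_ssubset (hsub.ssubset_of_ne (Ne.symm hne))
      simp only [Finset.mem_filter, Finset.mem_univ, true_and, not_forall] at hg1 hg2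
      obtain ⟨m'', hm'', hnI⟩ := hg2
      have hmm : m'' = m := by
        by_contra hc
        exact hnI (hg1 m'' (Finset.mem_erase.mpr ⟨hc, hm''⟩))
      refine ⟨g, fun m' hm' => ⟨fun hI hne' => ?_, fun hne' => ?_⟩⟩
      · rw [hne'] at hI; rw [hmm] at hnI; exact hnI hI
      · exact hg1 m' (Finset.mem_erase.mpr ⟨hne', hm'⟩)
    choose g hg using h
    exact ⟨g, hg⟩
  · rintro ⟨g, hg⟩ Y hY heq
    obtain ⟨m, hmX, hmY⟩ := Finset.exists_of_ssubset hY
    have hmem : g ⟨m, hmX⟩ ∈ extentOf I Y := by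
      simp only [Finset.mem_filter, Finset.mem_univ, true_and]
      intro m' hm'
      exact (hg ⟨m, hmX⟩ m' (hY.subset hm')).mpr (fun h => hmY (by rw [h] at hm'; exact hm'))
    rw [heq] at hmem
    simp only [Finset.mem_filter, Finset.mem_univ, true_and] at hmem
    exact (hg ⟨m, hmX⟩ m hmX).mp (hmem m hmX) rfl
end

section
/- Let (G, M, I) be a finite formal context, let G_s ⊆ G, and let K_s = (G_s, M, I_s) be the sampled context with I_s = I ∩ (G_s × M). Let B ⊆ M be an itemset that is closed in K_s (hence also closed in (G, M, I)). Then the minimum cardinality of a key of B computed in K_s is at most the minimum cardinality of a key of B computed in (G, M, I); that is, Level_{K_s}(B) ≤ Level_{(G,M,I)}(B). -/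
/-- Extent of itemset `B` in the sampled context `(Gs, M, I ∩ (Gs × M))`. -/
abbrev extentIn {G M : Type*} (I : G → M → Prop) [∀ g m, Decidable (I g m)]
    (Gs : Finset G) (B : Finset M) : Finset G :=
  Gs.filter fun g => ∀ m ∈ B, I g m

/-- Closure of itemset `B` in the sampled context `(Gs, M, I ∩ (Gs × M))`. -/
abbrev closureIn {G M : Type*} [Fintype M] (I : G → M → Prop) [∀ g m, Decidable (I g m)]
    (Gs : Finset G) (B : Finset M) : Finset M :=
  intentOf I (extentIn I Gs B)

/-- A key in the sampled context `(Gs, M, I ∩ (Gs × M))`. -/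
abbrev isKeyIn {G M : Type*} (I : G → M → Prop) [∀ g m, Decidable (I g m)]
    (Gs : Finset G) (X : Finset M) : Prop :=
  ∀ Y : Finset M, Y ⊂ X → extentIn I Gs Y ≠ extentIn I Gs X

/-- A passkey in the sampled context: a key of minimum cardinality among the keys with the
same closure. -/
abbrev isPasskeyIn {G M : Type*} [Fintype M] (I : G → M → Prop) [∀ g m, Decidable (I g m)]
    (Gs : Finset G) (X : Finset M) : Prop :=
  isKeyIn I Gs X ∧
    ∀ Z : Finset M, isKeyIn I Gs Z → closureIn I Gs Z = closureIn I Gs X → X.card ≤ Z.card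

lemma exists_key_subset_s8 {G M : Type*} (I : G → M → Prop) [∀ g m, Decidable (I g m)]
    (Gs : Finset G) :
    ∀ Y : Finset M, ∃ Z ⊆ Y, extentIn I Gs Z = extentIn I Gs Y ∧ isKeyIn I Gs Z := by
  intro Y
  induction Y using Finset.strongInduction with
  | _ Y ih =>
    by_cases h : isKeyIn I Gs Y
    · exact ⟨Y, subset_rfl, rfl, h⟩
    · simp only [isKeyIn, not_forall, not_ne_iff] at h
      obtain ⟨Y', hY', he⟩ := h
      obtain ⟨Z, hZY', hZe, hZk⟩ := ih Y' hY'
      exact ⟨Z, hZY'.trans hY'.subset, hZe.trans he, hZk⟩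

/-- If `B` is closed in the sampled context `K_s = (Gs, M, I ∩ (Gs × M))`,
then the passkey cardinality (`Level`) of `B` in `K_s` is at most the passkey cardinality
of `B` in the whole context `(G, M, I)`. -/
theorem level_in_sample_le_level {G M : Type*} [Fintype G] [Fintype M]
    (I : G → M → Prop) [∀ g m, Decidable (I g m)]
    (Gs : Finset G) (B : Finset M)
    (hB : closureIn I Gs B = B)
    (X Y : Finset M)
    (hX : isPasskeyIn I Gs X) (hXB : closureIn I Gs X = B)
    (hY : isPasskeyIn I Finset.univ Y) (hYB : closureIn I Finset.univ Y = B) :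
    X.card ≤ Y.card := by
  have hYsubB : Y ⊆ B := by
    intro m hm
    rw [← hYB]
    refine Finset.mem_filter.mpr ⟨Finset.mem_univ m, fun g hg => ?_⟩
    exact (Finset.mem_filter.mp hg).2 m hm
  have hext : extentIn I Gs Y = extentIn I Gs B := by
    apply Finset.Subset.antisymm
    · intro g hg
      obtain ⟨hg1, hg2⟩ := Finset.mem_filter.mp hg
      refine Finset.mem_filter.mpr ⟨hg1, fun m hm => ?_⟩
      rw [← hYB] at hm
      have hmem : g ∈ extentIn I Finset.univ Y :=
        Finset.mem_filter.mpr ⟨Finset.mem_univ g, hg2⟩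
      exact (Finset.mem_filter.mp hm).2 g hmem
    · intro g hg
      obtain ⟨hg1, hg2⟩ := Finset.mem_filter.mp hg
      exact Finset.mem_filter.mpr ⟨hg1, fun m hm => hg2 m (hYsubB hm)⟩
  obtain ⟨Z, hZY, hZe, hZk⟩ := exists_key_subset_s8 I Gs Y
  have hcl : closureIn I Gs Z = closureIn I Gs X := by
    rw [hXB, ← hB]
    unfold closureIn
    rw [hZe, hext]
  calc X.card ≤ Z.card := hX.2 Z hZk hcl
    _ ≤ Y.card := Finset.card_le_card hZY
end

section
/- Let (G, M, I) be a finite formal context, let B be a closed itemset, and let X ⊆ B. Then X' = B' if and only if the family {G \ m' | m ∈ X} covers G \ B', i.e., if and only if G \ B' ⊆ ∪_{m ∈ X} (G \ m'). (This is the set-covering characterization of the generators of B underlying the NP-completeness of finding a key of size at most k.) -/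
/-- For a closed itemset `B` and `X ⊆ B`, one has `X' = B'` iff the sets
`G \ m'` for `m ∈ X` cover `G \ B'` (the set-covering characterization of generators). -/
theorem generator_iff_set_cover {G M : Type*} [Fintype G] [Fintype M] [DecidableEq G]
    [DecidableEq M] (I : G → M → Prop) [∀ g m, Decidable (I g m)]
    (B X : Finset M) (hB : isClosedItemset I B) (hX : X ⊆ B) :
    extentOf I X = extentOf I B ↔
      (extentOf I B)ᶜ ⊆ X.biUnion fun m => (extentOf I {m})ᶜ := by
  have hsub : extentOf I B ⊆ extentOf I X := by
    intro g hg
    simp only [Finset.mem_filter, Finset.mem_univ, true_and] at hg ⊢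
    exact fun m hm => hg m (hX hm)
  have hbi : (X.biUnion fun m => (extentOf I {m})ᶜ) = (extentOf I X)ᶜ := by
    ext g
    simp [Finset.mem_biUnion, not_forall]
  rw [hbi]
  constructor
  · intro h
    rw [h]
  · intro h
    apply Finset.Subset.antisymm _ hsub
    intro g hg
    by_contra hgB
    exact Finset.mem_compl.mp (h (Finset.mem_compl.mpr hgB)) hg
end

section
/- Let (G, M, I) be a finite formal context and let M = M_1 ∪ … ∪ M_s be a partition of M into s blocks such that for every object g ∈ G the description g' contains exactly one attribute from each block (the simplest binarization of a many-valued context with s attributes). If the closure index CI of (G, M, I) equals s, then there exist objects g_1, …, g_s ∈ G and attributes m_1, …, m_s ∈ M such that (g_i, m_j) ∈ I if and only if i ≠ j (i.e., these objects and attributes form a contranominal-scale subcontext of size s), and for every i ≠ j the descriptions g_i' and g_j' differ in at least the two attributes m_i and m_j (m_i ∈ g_j' \ g_i' and m_j ∈ g_i' \ g_j'). -/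
/-- Suppose `M` is partitioned into blocks `M_1, …, M_s` such that every
object description `g'` contains exactly one attribute from each block (simplest
binarization of a many-valued context with `s` attributes). If the closure index of
`(G, M, I)` equals `s`, then there are objects `g_1, …, g_s` and attributes
`m_1, …, m_s` forming a contranominal-scale subcontext of size `s` (i.e.
`(g_i, m_j) ∈ I ↔ i ≠ j`); in particular, for `i ≠ j` the descriptions of `g_i` and `g_j`
differ at least in the two attributes `m_i` and `m_j`. -/
theorem binarized_ci_max_gives_contranominal {G M : Type*} [Fintype G] [Fintype M]
    (I : G → M → Prop) [∀ g m, Decidable (I g m)]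
    (s : ℕ) (blocks : Fin s → Finset M)
    (hdisj : ∀ i j : Fin s, i ≠ j → Disjoint (blocks i) (blocks j))
    (hcover : ∀ m : M, ∃ i : Fin s, m ∈ blocks i)
    (hone : ∀ (g : G) (i : Fin s), ∃! m : M, m ∈ blocks i ∧ I g m)
    (hne : (closureLevel I s).Nonempty)
    (hmax : ∀ k : ℕ, (closureLevel I k).Nonempty → k ≤ s) :
    ∃ (g : Fin s → G) (m : Fin s → M),
      (∀ i j : Fin s, I (g i) (m j) ↔ i ≠ j) ∧
      (∀ i j : Fin s, i ≠ j →
        I (g j) (m i) ∧ ¬ I (g i) (m i) ∧ I (g i) (m j) ∧ ¬ I (g j) (m j)) := by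
  classical
  obtain ⟨B, hBclosed, X, ⟨hXkey, _⟩, hXcl, hXcard⟩ := hne
  set m : Fin s → M := fun i => (X.equivFin.symm (Fin.cast hXcard.symm i) : M) with hm
  have hmX : ∀ i, m i ∈ X := fun i => (X.equivFin.symm (Fin.cast hXcard.symm i)).2
  have hminj : Function.Injective m := fun i j h => by
    have := X.equivFin.symm.injective (Subtype.ext h)
    exact Fin.ext (congrArg Fin.val this : _)
  have hg : ∀ i : Fin s, ∃ g : G, (∀ a ∈ X.erase (m i), I g a) ∧ ¬ I g (m i) := by
    intro i
    have hsub : X.erase (m i) ⊂ X := Finset.erase_ssubset (hmX i)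
    have hne' := hXkey _ hsub
    have hmono : extentOf I X ⊆ extentOf I (X.erase (m i)) := by
      intro g hg
      simp only [Finset.mem_filter, Finset.mem_univ, true_and] at *
      exact fun a ha => hg a (Finset.mem_of_mem_erase ha)
    obtain ⟨g, hg1, hg2⟩ := Finset.exists_of_ssubset (hmono.ssubset_of_ne hne'.symm)
    simp only [Finset.mem_filter, Finset.mem_univ, true_and] at hg1 hg2
    refine ⟨g, hg1, fun hI => hg2 fun a ha => ?_⟩
    rcases eq_or_ne a (m i) with rfl | hne''
    · exact hI
    · exact hg1 a (Finset.mem_erase.2 ⟨hne'', ha⟩)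
  choose g hg1 hg2 using hg
  have key : ∀ i j : Fin s, I (g i) (m j) ↔ i ≠ j := by
    intro i j
    constructor
    · rintro hI rfl; exact hg2 i hI
    · intro hij
      exact hg1 i (m j) (Finset.mem_erase.2 ⟨fun h => hij (hminj h).symm, hmX j⟩)
  exact ⟨g, m, key, fun i j hij =>
    ⟨(key j i).2 (Ne.symm hij), fun h => ((key i i).1 h) rfl,
     (key i j).2 hij, fun h => ((key j j).1 h) rfl⟩⟩
end
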